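/- arXiv:1505.02372 — 3 statements merged into one kernel-verified Lean document; each statement's English description precedes it below -/
import Mathlib

section
/- For every n > 3, a transformation f: 𝔹^n → 𝔹^n is defined by some reversible circuit with exactly n inputs over NOT, CNOT and C²NOT gates (no additional inputs) if and only if f is an even permutation of the set 𝔹^n; that is, F(n,0) is exactly the set of permutations in the alternating group A(𝔹^n). -/
open Filter

namespace Rev

/-- A reversible gate `TOF(I; t)` on `N` lines: a control set `I` with `|I| ≤ 2`
and a target `t ∉ I`.  `|I| = 0, 1, 2` correspond to NOT, CNOT, C²NOT. -/
structure Gate (N : ℕ) where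
  I : Finset (Fin N)
  t : Fin N
  card_le : I.card ≤ 2
  t_not_mem : t ∉ I

/-- The transformation computed by a gate: the target coordinate is XORed with the
conjunction of the control coordinates (the empty conjunction is `1`). -/
def Gate.apply {N : ℕ} (g : Gate N) (x : Fin N → Bool) : Fin N → Bool :=
  fun j => if j = g.t then xor (x g.t) (decide (∀ i ∈ g.I, x i = true)) else x j

/-- A reversible circuit: a finite sequence (composition) of gates. -/
abbrev Circuit (N : ℕ) := List (Gate N)

/-- The transformation computed by a circuit (composition of the gate maps). -/
def Circuit.eval {N : ℕ} (S : Circuit N) (x : Fin N → Bool) : Fin N → Bool :=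
  S.foldl (fun v g => g.apply v) x

/-- Gate complexity: the number of gates. -/
def Circuit.L {N : ℕ} (S : Circuit N) : ℕ := S.length

/-- The number of NOT and CNOT gates. -/
def Circuit.LC {N : ℕ} (S : Circuit N) : ℕ := (S.filter fun g => g.I.card ≤ 1).length

/-- The number of C²NOT (Toffoli) gates. -/
def Circuit.LT {N : ℕ} (S : Circuit N) : ℕ := (S.filter fun g => g.I.card = 2).length

/-- The quantum weight, given weights `WC` for NOT/CNOT gates and `WT` for C²NOT gates. -/
noncomputable def Circuit.W {N : ℕ} (WC WT : ℝ) (S : Circuit N) : ℝ :=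
  WC * S.LC + WT * S.LT

/-- A circuit has depth one if the sets `{t} ∪ I` of its gates are pairwise disjoint. -/
def DepthOne {N : ℕ} (S : Circuit N) : Prop :=
  S.Pairwise fun g₁ g₂ => Disjoint (insert g₁.t g₁.I) (insert g₂.t g₂.I)

/-- The depth of a circuit: the minimal number of depth-one sub-circuits whose
concatenation is the circuit. -/
noncomputable def Circuit.D {N : ℕ} (S : Circuit N) : ℕ :=
  sInf {d | ∃ parts : List (Circuit N),
    parts.length = d ∧ parts.flatten = S ∧ ∀ p ∈ parts, DepthOne p}

/-- Padding an input vector with zero values on `q` additional inputs. -/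
def pad {n q : ℕ} (x : Fin n → Bool) : Fin (n + q) → Bool :=
  fun i => if h : (i : ℕ) < n then x ⟨i, h⟩ else false

/-- A circuit `S` with `n + q` inputs implements `f : 𝔹ⁿ → 𝔹ᵐ` with `q` additional
inputs: there is a permutation `π` of the output positions such that for every `x`,
applying `S` to `⟨x, 0, …, 0⟩` and permuting the coordinates by `π` yields a vector
whose first `m` coordinates equal `f x`. -/
def Implements {n q m : ℕ} (S : Circuit (n + q)) (f : (Fin n → Bool) → Fin m → Bool) :
    Prop :=
  m ≤ n + q ∧ ∃ π : Equiv.Perm (Fin (n + q)), ∀ x : Fin n → Bool, ∀ j : Fin m,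
    ∀ hj : (j : ℕ) < n + q, Circuit.eval S (pad x) (π ⟨j, hj⟩) = f x j

/-- `f ∈ F(n, q)`: `f : 𝔹ⁿ → 𝔹ⁿ` is implementable with `q` additional inputs. -/
def Implementable (n q : ℕ) (f : (Fin n → Bool) → Fin n → Bool) : Prop :=
  ∃ S : Circuit (n + q), Implements S f

/-- `L(f, q)`: minimal gate complexity of a circuit implementing `f` with `q`
additional inputs. -/
noncomputable def Lmin (n q : ℕ) (f : (Fin n → Bool) → Fin n → Bool) : ℕ :=
  sInf {l | ∃ S : Circuit (n + q), Implements S f ∧ S.L = l}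

/-- The Shannon gate complexity function `L(n, q)`. -/
noncomputable def Lsh (n q : ℕ) : ℕ :=
  sSup {l | ∃ f, Implementable n q f ∧ Lmin n q f = l}

/-- `D(f, q)`: minimal depth of a circuit implementing `f` with `q` additional inputs. -/
noncomputable def Dmin (n q : ℕ) (f : (Fin n → Bool) → Fin n → Bool) : ℕ :=
  sInf {d | ∃ S : Circuit (n + q), Implements S f ∧ S.D = d}

/-- The Shannon depth function `D(n, q)`. -/
noncomputable def Dsh (n q : ℕ) : ℕ :=
  sSup {d | ∃ f, Implementable n q f ∧ Dmin n q f = d}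

/-- `W(f, q)`: minimal quantum weight of a circuit implementing `f` with `q`
additional inputs. -/
noncomputable def Wmin (WC WT : ℝ) (n q : ℕ) (f : (Fin n → Bool) → Fin n → Bool) : ℝ :=
  sInf {w | ∃ S : Circuit (n + q), Implements S f ∧ Circuit.W WC WT S = w}

/-- The Shannon quantum weight function `W(n, q)`. -/
noncomputable def Wsh (WC WT : ℝ) (n q : ℕ) : ℝ :=
  sSup {w | ∃ f, Implementable n q f ∧ Wmin WC WT n q f = w}

/-- `a ~ b`: `a n / b n → 1`. -/
def AsympEquiv (a b : ℕ → ℝ) : Prop :=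
  Tendsto (fun n => a n / b n) atTop (nhds 1)

/-- `a ≲ b`: `limsup (a n / b n) ≤ 1`. -/
def AsympLE (a b : ℕ → ℝ) : Prop :=
  Filter.limsup (fun n => a n / b n) atTop ≤ 1

/-- A growing function: nondecreasing and tending to `+∞`. -/
def Growing (φ : ℕ → ℝ) : Prop :=
  Monotone φ ∧ Tendsto φ atTop atTop

/-- `2 ^ (n - ⌈n / φ(n)⌉)` as a real number. -/
noncomputable def pow2e (φ : ℕ → ℝ) (n : ℕ) : ℝ :=
  (2 : ℝ) ^ ((n : ℤ) - ⌈(n : ℝ) / φ n⌉)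

end Rev

/-!
Every gate `TOF(I; t)` is the commutator of `TOF(I ∪ {m}; t)` and `NOT` on a line
`m ∉ I ∪ {t}`, which exists because `n ≥ 4`; hence every gate is even. The same commutator
identity, now borrowing a free line `m` for an intermediate result, builds every gate with up
to `n - 2` controls out of C²NOT gates. Two such gates that both move the all-ones vector but
no other common point have a 3-cycle as their commutator. NOT gates give all translations of
`𝔹ⁿ` and CNOT gates enough transvections to make the gate group 2-transitive, hence
primitive, and by Jordan's theorem a primitive permutation group containing a 3-cycle
contains the alternating group.
-/

section

open scoped commutatorElement

theorem Subgroup.commutatorElement_mem {G : Type*} [Group G] {H : Subgroup G} {a b : G}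
    (ha : a ∈ H) (hb : b ∈ H) : ⁅a, b⁆ ∈ H := by
  rw [commutatorElement_def]
  exact mul_mem (mul_mem (mul_mem ha hb) (inv_mem ha)) (inv_mem hb)

namespace Equiv.Perm

theorem isThreeCycle_commutatorElement {α : Type*} [Fintype α] [DecidableEq α] {σ τ : Perm α}
    (hσ : σ * σ = 1) (hτ : τ * τ = 1) {p : α} (hσp : σ p ≠ p) (hτp : τ p ≠ p)
    (hp : ∀ x, σ x ≠ x → τ x ≠ x → x = p) : IsThreeCycle ⁅σ, τ⁆ := by
  have hσσ (x : α) : σ (σ x) = x := by rw [← Perm.mul_apply, hσ, Perm.one_apply]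
  have hττ (x : α) : τ (τ x) = x := by rw [← Perm.mul_apply, hτ, Perm.one_apply]
  have hfix (x : α) (hx : x ≠ p) : σ x = x ∨ τ x = x := by
    by_contra! h; exact hx (hp x h.1 h.2)
  have hστ : σ (τ p) = τ p :=
    (hfix _ hτp).resolve_right fun h => hτp (by rwa [hττ, eq_comm] at h)
  have hτσ : τ (σ p) = σ p :=
    (hfix _ hσp).resolve_left fun h => hσp (by rwa [hσσ, eq_comm] at h)
  have hqr : τ p ≠ σ p := fun h => hσp (by rw [h, hσσ] at hστ; exact hστ.symm)
  suffices ⁅σ, τ⁆ = swap p (τ p) * swap p (σ p) from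
    this ▸ isThreeCycle_swap_mul_swap_same hτp.symm hσp.symm hqr
  rw [commutatorElement_def, inv_eq_of_mul_eq_one_right hσ, inv_eq_of_mul_eq_one_right hτ]
  ext x
  simp only [Perm.mul_apply]
  by_cases hxp : x = p
  · rw [hxp, swap_apply_left, swap_apply_of_ne_of_ne hσp hqr.symm, hστ, hττ]
  by_cases hxq : x = τ p
  · rw [hxq, swap_apply_of_ne_of_ne hτp hqr, swap_apply_right, hττ, hτσ, hσσ]
  by_cases hxr : x = σ p
  · rw [hxr, swap_apply_right, swap_apply_left, hτσ, hσσ, hστ]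
  rw [swap_apply_of_ne_of_ne hxp hxr, swap_apply_of_ne_of_ne hxp hxq]
  rcases hfix x hxp with hσx | hτx
  · by_cases hτx : τ x = x
    · rw [hτx, hσx, hτx, hσx]
    have hy : σ (τ x) = τ x :=
      (hfix _ fun h => hxq (by rw [← h, hττ])).resolve_right
        fun h => hτx (by rwa [hττ, eq_comm] at h)
    rw [hy, hττ, hσx]
  · by_cases hσx : σ x = x
    · rw [hτx, hσx, hτx, hσx]
    have hy : τ (σ x) = σ x :=
      (hfix _ fun h => hxr (by rw [← h, hσσ])).resolve_left
        fun h => hσx (by rwa [hσσ, eq_comm] at h)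
    rw [hτx, hy, hσσ]

end Equiv.Perm

end

namespace Rev

open Equiv Equiv.Perm Finset
open scoped commutatorElement

variable {n : ℕ}

def ctrlBit (C : Finset (Fin n)) (x : Fin n → Bool) : Bool := decide (∀ i ∈ C, x i = true)

lemma ctrlBit_eq_true {C : Finset (Fin n)} {x : Fin n → Bool} :
    ctrlBit C x = true ↔ ∀ i ∈ C, x i = true :=
  decide_eq_true_iff

@[simp] lemma ctrlBit_empty (x : Fin n → Bool) : ctrlBit ∅ x = true := by simp [ctrlBit]

@[simp] lemma ctrlBit_singleton (i : Fin n) (x : Fin n → Bool) : ctrlBit {i} x = x i := by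
  simp [ctrlBit]

lemma ctrlBit_insert (a : Fin n) (C : Finset (Fin n)) (x : Fin n → Bool) :
    ctrlBit (insert a C) x = x a * ctrlBit C x := by
  simp [ctrlBit, Bool.decide_and, Bool.mul_eq_and]

lemma ctrlBit_union (C D : Finset (Fin n)) (x : Fin n → Bool) :
    ctrlBit (C ∪ D) x = ctrlBit C x * ctrlBit D x := by
  simp [ctrlBit, or_imp, forall_and, Bool.decide_and, Bool.mul_eq_and]

lemma ctrlBit_add_single {C : Finset (Fin n)} {j : Fin n} (hj : j ∉ C) (x : Fin n → Bool)
    (b : Bool) : ctrlBit C (x + Pi.single j b) = ctrlBit C x := by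
  unfold ctrlBit
  congr 1
  exact propext <| forall₂_congr fun i hi => by
    rw [Pi.add_apply, Pi.single_eq_of_ne (ne_of_mem_of_not_mem hi hj), add_zero]

/-- `𝔹ⁿ` is `Fin n → Bool` with the Boolean-ring structure of `Bool`, so `+` is xor and
adding `Pi.single t b` flips line `t` exactly when `b = 1`. -/
def ctrlNot (C : Finset (Fin n)) (t : Fin n) (h : t ∉ C) : Perm (Fin n → Bool) where
  toFun x := x + Pi.single t (ctrlBit C x)
  invFun x := x + Pi.single t (ctrlBit C x)
  left_inv x := by ext; simp [ctrlBit_add_single h, add_assoc, BooleanRing.add_self]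
  right_inv x := by ext; simp [ctrlBit_add_single h, add_assoc, BooleanRing.add_self]

variable {C : Finset (Fin n)} {t : Fin n} {h : t ∉ C}

lemma ctrlNot_apply (x : Fin n → Bool) : ctrlNot C t h x = x + Pi.single t (ctrlBit C x) := rfl

@[simp] lemma ctrlNot_inv : (ctrlNot C t h)⁻¹ = ctrlNot C t h := rfl

lemma ctrlNot_mul_self : ctrlNot C t h * ctrlNot C t h = 1 :=
  mul_eq_one_iff_eq_inv.2 rfl

lemma ctrlNot_apply_ne_self_iff {x : Fin n → Bool} :
    ctrlNot C t h x ≠ x ↔ ctrlBit C x = true := by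
  rw [ctrlNot_apply, Ne, add_eq_left, Pi.single_eq_zero_iff]
  cases ctrlBit C x <;> decide

theorem ctrlNot_union_eq_commutatorElement {D E : Finset (Fin n)} {m : Fin n} (htD : t ∉ D)
    (htE : t ∉ E) (hmD : m ∉ D) (hmE : m ∉ E) (htm : t ≠ m) :
    ctrlNot (D ∪ E) t (by simp [htD, htE]) =
      ⁅ctrlNot (insert m D) t (by simp [htm, htD]), ctrlNot E m hmE⁆ := by
  ext x i
  simp only [commutatorElement_def, Perm.mul_apply, ctrlNot_inv, ctrlNot_apply, ctrlBit_insert,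
    ctrlBit_union, ctrlBit_add_single hmE, ctrlBit_add_single hmD, ctrlBit_add_single htD,
    ctrlBit_add_single htE, Pi.add_apply]
  rw [Pi.single_eq_same, Pi.single_eq_of_ne htm.symm, add_zero]
  rcases eq_or_ne i t with rfl | hit
  · simp only [Pi.single_eq_same, Pi.single_eq_of_ne htm, add_zero]
    generalize x i = a, x m = b, ctrlBit D x = d, ctrlBit E x = e
    revert a b d e; decide
  · simp only [Pi.single_eq_of_ne hit, add_zero, add_assoc, BooleanRing.add_self]

def Gate.toPerm (g : Gate n) : Perm (Fin n → Bool) := ctrlNot g.I g.t g.t_not_mem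

lemma Gate.coe_toPerm (g : Gate n) : ⇑g.toPerm = g.apply := by
  ext x j
  simp only [toPerm, ctrlNot_apply, Pi.add_apply, Pi.single_apply, Gate.apply, ctrlBit]
  split_ifs with hj
  · subst hj; rfl
  · exact add_zero _

def gateGroup (n : ℕ) : Subgroup (Perm (Fin n → Bool)) :=
  Subgroup.closure (Set.range Gate.toPerm)

lemma ctrlNot_mem_gateGroup (hC : C.card ≤ 2) : ctrlNot C t h ∈ gateGroup n :=
  Subgroup.subset_closure ⟨⟨C, t, hC, h⟩, rfl⟩

lemma Circuit.eval_cons (g : Gate n) (S : Circuit n) :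
    Circuit.eval (g :: S) = S.eval ∘ g.apply :=
  rfl

lemma Circuit.eval_append (S T : Circuit n) : Circuit.eval (S ++ T) = T.eval ∘ S.eval := by
  ext1 x
  simp [Circuit.eval, List.foldl_append]

theorem exists_eval_eq_iff {f : (Fin n → Bool) → Fin n → Bool} :
    (∃ S : Circuit n, S.eval = f) ↔ ∃ σ ∈ gateGroup n, ⇑σ = f := by
  constructor
  · rintro ⟨S, rfl⟩
    induction S with
    | nil => exact ⟨1, one_mem _, rfl⟩
    | cons g S ih =>
      obtain ⟨σ, hσ, hσS⟩ := ih
      exact ⟨σ * g.toPerm, mul_mem hσ (Subgroup.subset_closure ⟨g, rfl⟩), by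
        rw [Perm.coe_mul, hσS, g.coe_toPerm, Circuit.eval_cons]⟩
  · rintro ⟨σ, hσ, rfl⟩
    induction hσ using Subgroup.closure_induction'' with
    | mem _ hg | inv_mem _ hg =>
      obtain ⟨g, rfl⟩ := hg
      exact ⟨[g], g.coe_toPerm.symm⟩
    | one => exact ⟨[], rfl⟩
    | mul σ τ _ _ hσ hτ =>
      obtain ⟨S, hS⟩ := hσ
      obtain ⟨T, hT⟩ := hτ
      exact ⟨T ++ S, by rw [Circuit.eval_append, hS, hT, Perm.coe_mul]⟩

lemma exists_notMem_of_card_lt {s : Finset (Fin n)} (hs : s.card < n) : ∃ m, m ∉ s :=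
  let ⟨m, _, hm⟩ := exists_mem_notMem_of_card_lt_card (t := univ) (by simpa using hs)
  ⟨m, hm⟩

theorem sign_ctrlNot {m : Fin n} (hm : m ∉ insert t C) : sign (ctrlNot C t h) = 1 := by
  rw [mem_insert, not_or] at hm
  have hC : ctrlNot C t h = ctrlNot (C ∪ ∅) t (by simpa using h) := by simp only [union_empty]
  rw [hC, ctrlNot_union_eq_commutatorElement h (notMem_empty t) hm.2 (notMem_empty m)
      (Ne.symm hm.1), map_commutatorElement, commutatorElement_eq_one_iff_mul_comm, mul_comm]

theorem gateGroup_le_alternatingGroup (hn : 3 < n) :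
    gateGroup n ≤ alternatingGroup (Fin n → Bool) := by
  rw [gateGroup, Subgroup.closure_le]
  rintro _ ⟨g, rfl⟩
  obtain ⟨m, hm⟩ :=
    exists_notMem_of_card_lt ((card_insert_le g.t g.I).trans_lt (by grind [g.card_le]))
  exact sign_ctrlNot hm

theorem ctrlNot_mem_gateGroup_of_card_add_two_le (hC : C.card + 2 ≤ n) :
    ctrlNot C t h ∈ gateGroup n := by
  induction C using Finset.strongInduction generalizing t with
  | H C ih =>
  rcases le_or_gt C.card 2 with hC2 | hC2
  · exact ctrlNot_mem_gateGroup hC2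
  obtain ⟨a, ha⟩ : C.Nonempty := card_pos.1 (by omega)
  obtain ⟨m, hm⟩ := exists_notMem_of_card_lt ((card_insert_le t C).trans_lt (by omega))
  rw [mem_insert, not_or] at hm
  have hat : t ∉ ({a} : Finset (Fin n)) := by simpa using (ne_of_mem_of_not_mem ha h).symm
  have hma : m ∉ ({a} : Finset (Fin n)) := by simpa using (ne_of_mem_of_not_mem ha hm.2).symm
  have hmC : m ∉ C.erase a := fun hm' => hm.2 (mem_of_mem_erase hm')
  have hsplit : ctrlNot C t h = ctrlNot ({a} ∪ C.erase a) t (by simpa [h] using hat) := by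
    simp only [← insert_eq, insert_erase ha]
  rw [hsplit, ctrlNot_union_eq_commutatorElement hat (fun ht => h (mem_of_mem_erase ht)) hma hmC
    (Ne.symm hm.1)]
  have hB : ctrlNot (C.erase a) m hmC ∈ gateGroup n :=
    ih _ (erase_ssubset ha) (by rw [card_erase_of_mem ha]; omega)
  have hA := ctrlNot_mem_gateGroup (t := t) (h := by simpa [Ne.symm hm.1] using hat)
    ((card_insert_le m {a}).trans (by simp))
  exact Subgroup.commutatorElement_mem hA hB

theorem exists_isThreeCycle_mem_gateGroup (hn : 2 < n) :
    ∃ σ ∈ gateGroup n, IsThreeCycle σ := by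
  set a : Fin n := ⟨0, by omega⟩
  set b : Fin n := ⟨1, by omega⟩
  set c : Fin n := ⟨2, by omega⟩
  have hab : a ≠ b := by simp [a, b, Fin.ext_iff]
  have haC : a ∉ univ \ {a, b} := by simp
  have hcC : c ∉ ({a, b} : Finset (Fin n)) := by simp [a, b, c, Fin.ext_iff]
  have hσ : ctrlNot (univ \ {a, b}) a haC ∈ gateGroup n :=
    ctrlNot_mem_gateGroup_of_card_add_two_le (by
      rw [card_sdiff_of_subset (subset_univ _), card_univ, Fintype.card_fin, card_pair hab]; omega)
  have hτ : ctrlNot {a, b} c hcC ∈ gateGroup n := ctrlNot_mem_gateGroup (card_le_two)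
  refine ⟨_, Subgroup.commutatorElement_mem hσ hτ,
    isThreeCycle_commutatorElement ctrlNot_mul_self ctrlNot_mul_self (p := 1) ?_ ?_ ?_⟩
  · exact ctrlNot_apply_ne_self_iff.2 (ctrlBit_eq_true.2 fun _ _ => rfl)
  · exact ctrlNot_apply_ne_self_iff.2 (ctrlBit_eq_true.2 fun _ _ => rfl)
  · intro x hxσ hxτ
    rw [ctrlNot_apply_ne_self_iff, ctrlBit_eq_true] at hxσ hxτ
    ext i
    by_cases hi : i ∈ ({a, b} : Finset (Fin n))
    · exact hxτ i hi
    · exact hxσ i (by simpa using hi)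

lemma addRight_single_mem_gateGroup (i : Fin n) (b : Bool) :
    Equiv.addRight (Pi.single i b) ∈ gateGroup n := by
  cases b
  · rw [← Bool.zero_eq_false, Pi.single_zero, addRight_zero]
    exact one_mem _
  · convert ctrlNot_mem_gateGroup (C := ∅) (t := i) (h := notMem_empty i) (by simp) using 1
    ext1 x
    simp [ctrlNot_apply]

theorem addRight_mem_gateGroup (a : Fin n → Bool) : Equiv.addRight a ∈ gateGroup n := by
  rw [← univ_sum_single a]
  refine sum_induction _ (fun a => Equiv.addRight a ∈ gateGroup n) (fun a b ha hb => ?_) ?_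
    fun i _ => addRight_single_mem_gateGroup i (a i)
  · rw [addRight_add]
    exact mul_mem hb ha
  · rw [addRight_zero]
    exact one_mem _

theorem exists_mem_gateGroup_apply_eq_add_smul {j : Fin n} {v : Fin n → Bool} (hv : v j = 0) :
    ∃ g ∈ gateGroup n, ∀ x, g x = x + x j • v := by
  rw [← univ_sum_single v, ← sum_erase _ (by simpa using hv)]
  refine (sum_induction _ (fun v => v j = 0 ∧ ∃ g ∈ gateGroup n, ∀ x, g x = x + x j • v)
    ?_ ?_ ?_).2
  · rintro v w ⟨hv, g, hg, hgv⟩ ⟨hw, g', hg', hgw⟩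
    refine ⟨by simp [hv, hw], g * g', mul_mem hg hg', fun x => ?_⟩
    rw [Perm.mul_apply, hgw, hgv, smul_add]
    ext
    simp only [Pi.add_apply, Pi.smul_apply, smul_eq_mul, hw, mul_zero, add_zero]
    ring
  · exact ⟨rfl, 1, one_mem _, fun x => by simp⟩
  · intro i hi
    have hji : j ≠ i := (ne_of_mem_erase hi).symm
    refine ⟨Pi.single_eq_of_ne hji _, ?_⟩
    cases v i
    · refine ⟨1, one_mem _, fun x => ?_⟩
      rw [← Bool.zero_eq_false, Pi.single_zero, smul_zero, add_zero, Perm.one_apply]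
    · refine ⟨ctrlNot {j} i (by simpa using hji.symm), ctrlNot_mem_gateGroup (by simp),
        fun x => ?_⟩
      rw [ctrlNot_apply, ctrlBit_singleton, ← Bool.one_eq_true, ← Pi.single_smul, smul_eq_mul,
        mul_one]

lemma exists_mem_gateGroup_fixing_zero_apply_eq_one {u : Fin n → Bool} (hu : u ≠ 0) :
    ∃ g ∈ gateGroup n, g 0 = 0 ∧ g u = 1 := by
  obtain ⟨j, hj⟩ := Function.ne_iff.1 hu
  have huj : u j = 1 := eq_true_of_ne_false hj
  obtain ⟨g, hg, hgx⟩ := exists_mem_gateGroup_apply_eq_add_smul (v := u + 1) (j := j)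
    (by rw [Pi.add_apply, Pi.one_apply, huj, BooleanRing.add_self])
  refine ⟨g, hg, by simp [hgx], ?_⟩
  ext i
  simp [hgx, huj, ← add_assoc, BooleanRing.add_self]

theorem exists_mem_gateGroup_fixing_zero {u w : Fin n → Bool} (hu : u ≠ 0) (hw : w ≠ 0) :
    ∃ g ∈ gateGroup n, g 0 = 0 ∧ g u = w := by
  obtain ⟨g, hg, hg0, hgu⟩ := exists_mem_gateGroup_fixing_zero_apply_eq_one hu
  obtain ⟨g', hg', hg'0, hg'w⟩ := exists_mem_gateGroup_fixing_zero_apply_eq_one hw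
  refine ⟨g'⁻¹ * g, mul_mem (inv_mem hg') hg, ?_, ?_⟩ <;>
    simp [Equiv.symm_apply_eq, hg0, hg'0, hgu, hg'w]

theorem isMultiplyPretransitive_gateGroup :
    MulAction.IsMultiplyPretransitive (gateGroup n) (Fin n → Bool) 2 := by
  rw [MulAction.is_two_pretransitive_iff]
  intro a b c d hab hcd
  obtain ⟨g, hg, hg0, hgba⟩ := exists_mem_gateGroup_fixing_zero (u := b - a) (w := d - c)
    (sub_ne_zero.2 hab.symm) (sub_ne_zero.2 hcd.symm)
  refine ⟨⟨Equiv.addRight c * g * Equiv.subRight a,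
    mul_mem (mul_mem (addRight_mem_gateGroup c) hg)
      (subRight_eq_addRight_neg a ▸ addRight_mem_gateGroup (-a))⟩, ?_, ?_⟩
  · simp [Subgroup.smul_def, hg0]
  · simp [Subgroup.smul_def, hgba]

theorem gateGroup_eq_alternatingGroup (hn : 3 < n) :
    gateGroup n = alternatingGroup (Fin n → Bool) := by
  refine le_antisymm (gateGroup_le_alternatingGroup hn) ?_
  obtain ⟨σ, hσ, hσ3⟩ := exists_isThreeCycle_mem_gateGroup (by omega : 2 < n)
  exact alternatingGroup_le_of_isPreprimitive_of_isThreeCycle_mem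
    (MulAction.isPreprimitive_of_is_two_pretransitive isMultiplyPretransitive_gateGroup) hσ3 hσ

end Rev

namespace Rev

/-- For `n > 3`, a transformation `f : 𝔹ⁿ → 𝔹ⁿ` is defined by some reversible circuit
with exactly `n` inputs (no additional inputs) if and only if `f` is an even
permutation of `𝔹ⁿ`. -/
theorem defined_iff_even_perm (n : ℕ) (hn : 3 < n)
    (f : (Fin n → Bool) → Fin n → Bool) :
    (∃ S : Circuit n, Circuit.eval S = f) ↔
      ∃ e : Equiv.Perm (Fin n → Bool), ⇑e = f ∧ Equiv.Perm.sign e = 1 := by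
  simp only [exists_eval_eq_iff, gateGroup_eq_alternatingGroup hn, Equiv.Perm.mem_alternatingGroup,
    and_comm]

end Rev
end

section
/- For each s, let g_s : 𝔹^s → 𝔹^{2^s} be the transformation sending v to the tuple of all subset-XORs (⊕_{i∈T} v_i)_{T ⊆ {1,…,s}} (with the empty XOR equal to 0). There exists a family of reversible circuits (S_s) consisting only of CNOT gates and a sequence q(s) such that S_s implements g_s with q(s) additional inputs and, as s → ∞, L(S_s) ~ 2^{s+1} and q(s) ~ 2^s. -/
open Filter

namespace Rev

/-- `g_s : 𝔹ˢ → 𝔹^{2ˢ}`: the tuple of all subset-XORs `⊕_{i ∈ T} v_i`, the index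
`j : Fin (2 ^ s)` encoding the subset `T ⊆ {1, …, s}` via its binary digits. -/
def subsetXorAll (s : ℕ) : (Fin s → Bool) → Fin (2 ^ s) → Bool :=
  fun v j => decide ((Finset.univ.filter
    fun i : Fin s => (j : ℕ).testBit i.val = true ∧ v i = true).card % 2 = 1)

/-!
Put the inputs on lines `0, …, s - 1` and the subset-XOR with index `j < 2 ^ s` on the ancilla
line `s + j`, which starts at `0` (index `0` is the empty XOR). For `0 < j = 2 ^ L + j'` with
`j' < 2 ^ L` (so `L = log₂ j`), the XOR with index `j` is the one with index `j'` plus `x_L`; hence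
once line `s + j'` is filled, two CNOTs (from line `s + j'` and from input `L`) fill line `s + j`.
Filling `j = 1, …, 2 ^ s - 1` in order uses `2 ^ (s + 1) - 2` gates and `2 ^ s` ancillas.
-/

section Cnot

variable {N : ℕ}

def cnot (c t : Fin N) (h : c ≠ t) : Gate N :=
  ⟨{c}, t, by simp, by simpa using h.symm⟩

lemma cnot_apply (c t : Fin N) (h : c ≠ t) (v : Fin N → Bool) :
    (cnot c t h).apply v = Function.update v t (xor (v t) (v c)) := by
  funext i
  by_cases hi : i = t
  · subst hi; simp [Gate.apply, cnot]
  · simp [Gate.apply, cnot, hi]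

lemma Circuit.eval_append_s18 (A B : Circuit N) (v : Fin N → Bool) :
    (A ++ B).eval v = B.eval (A.eval v) :=
  List.foldl_append ..

lemma eval_cnot_cnot_of_eq_false {a b t : Fin N} (ha : a ≠ t) (hb : b ≠ t)
    (v : Fin N → Bool) (hv : v t = false) :
    Circuit.eval [cnot a t ha, cnot b t hb] v = Function.update v t (xor (v a) (v b)) := by
  simp [Circuit.eval, cnot_apply, hv, Function.update_of_ne hb]

end Cnot

lemma pad_eq_append {n q : ℕ} (x : Fin n → Bool) :
    (pad x : Fin (n + q) → Bool) = Fin.append x fun _ => false := by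
  funext i
  refine Fin.addCases (fun i => ?_) (fun j => ?_) i <;>
    simp [pad, Fin.append_left, Fin.append_right]

section SubsetXor

variable {s : ℕ}

lemma subsetXorAll_zero (x : Fin s → Bool) : subsetXorAll s x 0 = false := by
  simp [subsetXorAll]

lemma subsetXorAll_add_two_pow (x : Fin s → Bool) (L : Fin s) {j : ℕ} (hj : j < 2 ^ (L : ℕ))
    (h : j + 2 ^ (L : ℕ) < 2 ^ s) :
    subsetXorAll s x ⟨j + 2 ^ (L : ℕ), h⟩ = xor (subsetXorAll s x ⟨j, by omega⟩) (x L) := by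
  have hbit : ∀ i : ℕ, (j + 2 ^ (L : ℕ)).testBit i = (j.testBit i || decide ((L : ℕ) = i)) := by
    intro i
    rw [← Nat.or_two_pow_eq_add_of_lt hj, Nat.testBit_or, Nat.testBit_two_pow]
  have hL : j.testBit L = false := Nat.testBit_lt_two_pow hj
  set T := Finset.univ.filter fun i : Fin s => j.testBit i = true ∧ x i = true with hT
  cases hx : x L
  · have : (Finset.univ.filter fun i : Fin s =>
        (j + 2 ^ (L : ℕ)).testBit i = true ∧ x i = true) = T := by
      ext i
      by_cases hi : L = i
      · subst hi; simp [T, hx]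
      · simp [T, hbit, Fin.val_ne_of_ne hi]
    simp [subsetXorAll, this, T]
  · have hLT : L ∉ T := by simp [T, hL]
    have : (Finset.univ.filter fun i : Fin s =>
        (j + 2 ^ (L : ℕ)).testBit i = true ∧ x i = true) = insert L T := by
      ext i
      by_cases hi : L = i
      · subst hi; simp [T, hx, hbit]
      · simp [T, hbit, Fin.val_ne_of_ne hi, Ne.symm hi]
    simp only [subsetXorAll, this, Finset.card_insert_of_notMem hLT, ← hT]
    rcases Nat.mod_two_eq_zero_or_one T.card with h | h <;> simp [h, Nat.succ_mod_two_eq_one_iff]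

def subsetXorStep (s j : ℕ) : Circuit (s + 2 ^ s) :=
  if h : 0 < j ∧ j < 2 ^ s then
    have hlog : Nat.log 2 j < s := Nat.log_lt_of_lt_pow h.1.ne' h.2
    [cnot (Fin.natAdd s ⟨j - 2 ^ Nat.log 2 j, (Nat.sub_le _ _).trans_lt h.2⟩)
        (Fin.natAdd s ⟨j, h.2⟩)
        (by simp [Fin.ext_iff]; have := Nat.two_pow_pos (Nat.log 2 j); omega),
      cnot (Fin.castAdd (2 ^ s) ⟨Nat.log 2 j, hlog⟩) (Fin.natAdd s ⟨j, h.2⟩)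
        (by simp [Fin.ext_iff]; omega)]
  else []

def subsetXorCircuit (s k : ℕ) : Circuit (s + 2 ^ s) :=
  (List.range (k + 1)).flatMap (subsetXorStep s)

lemma subsetXorCircuit_succ (s k : ℕ) :
    subsetXorCircuit s (k + 1) = subsetXorCircuit s k ++ subsetXorStep s (k + 1) := by
  rw [subsetXorCircuit, subsetXorCircuit, List.range_succ, List.flatMap_append]
  simp

lemma length_subsetXorCircuit {k : ℕ} (hk : k < 2 ^ s) : (subsetXorCircuit s k).L = 2 * k := by
  induction k with
  | zero => simp [subsetXorCircuit, subsetXorStep, Circuit.L]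
  | succ k ih =>
    have hstep : (subsetXorStep s (k + 1)).length = 2 := by simp [subsetXorStep, hk]
    simp only [Circuit.L] at ih ⊢
    rw [subsetXorCircuit_succ, List.length_append, ih (by omega), hstep]
    ring

lemma card_controls_of_mem_subsetXorCircuit {k : ℕ} {g : Gate (s + 2 ^ s)}
    (hg : g ∈ subsetXorCircuit s k) : g.I.card = 1 := by
  obtain ⟨j, -, hgj⟩ := List.mem_flatMap.mp hg
  unfold subsetXorStep at hgj
  split_ifs at hgj
  · rcases List.mem_pair.mp hgj with rfl | rfl <;> simp [cnot]
  · simp at hgj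

def filledState (x : Fin s → Bool) (k : ℕ) : Fin (s + 2 ^ s) → Bool :=
  Fin.append x fun j => decide ((j : ℕ) ≤ k) && subsetXorAll s x j

@[simp] lemma filledState_castAdd (x : Fin s → Bool) (k : ℕ) (i : Fin s) :
    filledState x k (Fin.castAdd (2 ^ s) i) = x i :=
  Fin.append_left ..

@[simp] lemma filledState_natAdd (x : Fin s → Bool) (k : ℕ) (j : Fin (2 ^ s)) :
    filledState x k (Fin.natAdd s j) = (decide ((j : ℕ) ≤ k) && subsetXorAll s x j) :=
  Fin.append_right ..

lemma filledState_zero (x : Fin s → Bool) : filledState x 0 = pad x := by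
  rw [pad_eq_append]
  funext i
  refine Fin.addCases (fun i => ?_) (fun j => ?_) i
  · simp [-Fin.castAdd_mk]
  · by_cases hj : (j : ℕ) = 0
    · obtain rfl : j = 0 := Fin.ext hj
      simp [subsetXorAll_zero, -Fin.natAdd_mk]
    · simp [hj, -Fin.natAdd_mk]

lemma filledState_succ (x : Fin s → Bool) {k : ℕ} (hk : k + 1 < 2 ^ s) :
    filledState x (k + 1) = Function.update (filledState x k) (Fin.natAdd s ⟨k + 1, hk⟩)
      (subsetXorAll s x ⟨k + 1, hk⟩) := by
  funext i
  refine Fin.addCases (fun i => ?_) (fun j => ?_) i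
  · rw [Function.update_of_ne (by simp [Fin.ext_iff]; omega)]
    simp
  · by_cases hj : (j : ℕ) = k + 1
    · obtain rfl : j = ⟨k + 1, hk⟩ := Fin.ext hj
      simp [-Fin.natAdd_mk]
    · have : (j : ℕ) ≤ k + 1 ↔ (j : ℕ) ≤ k := by omega
      simp [Fin.ext_iff, hj, this, -Fin.natAdd_mk]

lemma eval_subsetXorStep (x : Fin s → Bool) {k : ℕ} (hk : k + 1 < 2 ^ s) :
    (subsetXorStep s (k + 1)).eval (filledState x k) = filledState x (k + 1) := by
  rw [subsetXorStep, dif_pos ⟨k.succ_pos, hk⟩,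
    eval_cnot_cnot_of_eq_false _ _ _ (by simp [-Fin.natAdd_mk]), filledState_succ x hk]
  have hprev : k + 1 - 2 ^ Nat.log 2 (k + 1) ≤ k := by
    have := Nat.two_pow_pos (Nat.log 2 (k + 1))
    omega
  set L := Nat.log 2 (k + 1)
  have hpow : 2 ^ L ≤ k + 1 := Nat.pow_log_le_self 2 k.succ_ne_zero
  have hlt : k + 1 < 2 ^ L + 2 ^ L := by
    simpa [pow_succ, mul_two] using Nat.lt_pow_succ_log_self one_lt_two (k + 1)
  have hlog : L < s := Nat.log_lt_of_lt_pow k.succ_ne_zero hk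
  have hrec := subsetXorAll_add_two_pow x ⟨L, hlog⟩ (j := k + 1 - 2 ^ L) (by simp only; omega)
    (by simp only; omega)
  simp only [Nat.sub_add_cancel hpow] at hrec
  simp only [filledState_natAdd, filledState_castAdd]
  rw [decide_eq_true hprev, Bool.true_and, hrec]

lemma eval_subsetXorCircuit (x : Fin s → Bool) {k : ℕ} (hk : k < 2 ^ s) :
    (subsetXorCircuit s k).eval (pad x) = filledState x k := by
  induction k with
  | zero =>
    rw [filledState_zero]
    rfl
  | succ k ih =>
    rw [subsetXorCircuit_succ, Circuit.eval_append_s18, ih (by omega), eval_subsetXorStep x hk]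

end SubsetXor

lemma implements_subsetXorCircuit (s : ℕ) :
    Implements (subsetXorCircuit s (2 ^ s - 1)) (subsetXorAll s) := by
  refine ⟨Nat.le_add_left _ _, (finCongr (Nat.add_comm s (2 ^ s))).trans finAddFlip,
    fun x j hj => ?_⟩
  have hπ : (finCongr (Nat.add_comm s (2 ^ s))).trans finAddFlip ⟨j, hj⟩ = Fin.natAdd s j :=
    finAddFlip_apply_castAdd j s
  rw [hπ, eval_subsetXorCircuit x (Nat.sub_lt (Nat.two_pow_pos s) one_pos), filledState_natAdd]
  simp [Nat.le_sub_one_of_lt j.isLt]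

lemma asympEquiv_sub_const {b : ℕ → ℝ} (c : ℝ) (hb : Tendsto b atTop atTop) :
    AsympEquiv (fun n => b n - c) b := by
  have hlim : Tendsto (fun n => 1 - c / b n) atTop (nhds 1) := by
    simpa using tendsto_const_nhds.sub (tendsto_const_nhds.div_atTop hb)
  refine hlim.congr' ?_
  filter_upwards [hb.eventually_ne_atTop 0] with n hn
  field_simp

/-- All `2ˢ` subset-XORs of `s` variables can be implemented by reversible circuits
`S_s` consisting only of CNOT gates, with `q s` additional inputs, where
`L(S_s) ~ 2^{s+1}` and `q s ~ 2ˢ`. -/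
theorem subset_xors_complexity :
    ∃ (q : ℕ → ℕ) (S : ∀ s, Circuit (s + q s)),
      (∀ s, (∀ g ∈ S s, g.I.card = 1) ∧ Implements (S s) (subsetXorAll s)) ∧
      AsympEquiv (fun s => ((S s).L : ℝ)) (fun s => (2 : ℝ) ^ (s + 1)) ∧
      AsympEquiv (fun s => (q s : ℝ)) (fun s => (2 : ℝ) ^ s) := by
  refine ⟨fun s => 2 ^ s, fun s => subsetXorCircuit s (2 ^ s - 1),
    fun s => ⟨fun g => card_controls_of_mem_subsetXorCircuit, implements_subsetXorCircuit s⟩,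
    ?_, ?_⟩
  · have hL : ∀ s, ((subsetXorCircuit s (2 ^ s - 1)).L : ℝ) = 2 ^ (s + 1) - 2 := fun s => by
      rw [length_subsetXorCircuit (Nat.sub_lt (Nat.two_pow_pos s) one_pos),
        Nat.cast_mul, Nat.cast_pred (Nat.two_pow_pos s)]
      push_cast
      ring
    simp only [hL]
    exact asympEquiv_sub_const 2 <|
      (tendsto_pow_atTop_atTop_of_one_lt one_lt_two).comp (tendsto_add_atTop_nat 1)
  · refine tendsto_const_nhds.congr fun s => ?_
    push_cast
    exact (div_self (by positivity)).symm

end Rev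
end

section
/- For each s, let g_s : 𝔹^s → 𝔹^{2^s} be the transformation sending v to the tuple of all subset-XORs (⊕_{i∈T} v_i)_{T ⊆ {1,…,s}} (with the empty XOR equal to 0). There exists a family of reversible circuits (S_s) consisting only of CNOT gates and a sequence q(s) such that S_s implements g_s with q(s) additional inputs and, as s → ∞, D(S_s) ~ s, L(S_s) ~ 3·2^s and q(s) ~ 2^{s+1}. -/
open Filter

/-!
Cells: the `s` inputs, `2 ^ s` accumulators `u_m` and `2 ^ s - 1` copy cells. The copy cells
`2 ^ j, …, 2 ^ (j + 1) - 1` receive `x_j` by a doubling fan-out: copy `2 ^ j` reads the input at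
layer `1`, and copy `2 ^ j + 2 ^ i + d` (with `d < 2 ^ i < 2 ^ j`) reads copy `2 ^ j + d` at layer
`i + 2`. The accumulator `m = 2 ^ j + c` (with `c < 2 ^ j`) reads the copy `m` of `x_j` at layer
`j + 2` and the accumulator `u_c` at layer `j + 3`, when `u_c` already holds the parity of `c`;
after `s + 3` layers `u_m` holds the parity of `m`. Every copy cell is written once and every
`u_m` with `m ≠ 0` twice, giving `3 · 2 ^ s - 3` gates on `2 ^ (s + 1) - 1` ancillas. Conversely
the gates completing the accumulators `2 ^ (k + 1) - 1`, `k < s`, form a chain in which each gate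
reads the output of the previous one, so the depth is at least `s`.
-/

theorem List.sublist_flatten_of_forall₂_mem {α : Type*} {l : List α} {ls : List (List α)}
    (h : List.Forall₂ (· ∈ ·) l ls) : l.Sublist ls.flatten := by
  induction h with
  | nil => simp
  | cons ha _ ih => exact (List.singleton_sublist.mpr ha).append ih

namespace Rev

open Finset

local notation "lg" => Nat.log 2

namespace Gate

variable {N : ℕ}

def cnot (c t : Fin N) (h : c ≠ t) : Gate N :=
  ⟨{c}, t, by simp, by simpa [eq_comm] using h⟩

theorem cnot_apply (c t : Fin N) (h : c ≠ t) (x : Fin N → Bool) :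
    (cnot c t h).apply x = Function.update x t (xor (x t) (x c)) := by
  funext j
  by_cases hj : j = t
  · subst hj; simp [cnot, Gate.apply]
  · simp [cnot, Gate.apply, hj]

def Overlaps (g₁ g₂ : Gate N) : Prop :=
  ¬ Disjoint (insert g₁.t g₁.I) (insert g₂.t g₂.I)

end Gate

theorem DepthOne.length_le_one_of_isChain {N : ℕ} {p gs : Circuit N} (hp : DepthOne p)
    (hgs : gs.Sublist p) (hchain : gs.IsChain Gate.Overlaps) : gs.length ≤ 1 := by
  match gs, hgs, hchain with
  | [], _, _ | [_], _, _ => simp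
  | g₁ :: g₂ :: _, hgs, hchain =>
    exact absurd ((List.pairwise_cons.mp (hp.sublist hgs)).1 g₂ (by simp))
      (List.isChain_cons_cons.mp hchain).1

namespace Circuit

variable {N : ℕ}

theorem eval_nil (x : Fin N → Bool) : Circuit.eval [] x = x := rfl

theorem eval_cons_s19 (g : Gate N) (S : Circuit N) (x : Fin N → Bool) :
    Circuit.eval (g :: S) x = Circuit.eval S (g.apply x) := rfl

theorem eval_append_s19 (S T : Circuit N) (x : Fin N → Bool) :
    Circuit.eval (S ++ T) x = Circuit.eval T (Circuit.eval S x) := by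
  simp [Circuit.eval, List.foldl_append]

theorem D_le_length {S : Circuit N} (parts : List (Circuit N)) (hS : parts.flatten = S)
    (hparts : ∀ p ∈ parts, DepthOne p) : S.D ≤ parts.length :=
  Nat.sInf_le ⟨parts, rfl, hS, hparts⟩

theorem length_le_of_isChain (parts : List (Circuit N)) (hparts : ∀ p ∈ parts, DepthOne p)
    {gs : Circuit N} (hgs : gs.Sublist parts.flatten) (hchain : gs.IsChain Gate.Overlaps) :
    gs.length ≤ parts.length := by
  induction parts generalizing gs with
  | nil => simp_all
  | cons p ps ih =>
    obtain ⟨a, b, rfl, ha, hb⟩ := List.sublist_append_iff.mp hgs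
    obtain ⟨hcha, hchb, -⟩ := List.isChain_append.mp hchain
    have := (hparts p (by simp)).length_le_one_of_isChain ha hcha
    have := ih (fun q hq => hparts q (by simp [hq])) hb hchb
    simp only [List.length_append, List.length_cons]
    omega

theorem length_le_D_of_isChain {S gs : Circuit N} (hgs : gs.Sublist S)
    (hchain : gs.IsChain Gate.Overlaps) : gs.length ≤ S.D := by
  have hS : (S.map ([·])).flatten = S := by rw [← List.flatMap_def, List.flatMap_singleton']
  refine le_csInf ⟨S.length, S.map ([·]), by simp, hS, by simp [DepthOne]⟩ ?_
  rintro d ⟨parts, rfl, rfl, hparts⟩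
  exact length_le_of_isChain parts hparts hgs hchain

end Circuit

/-- A layer of CNOT gates: `control t = some c` puts a CNOT with control `c` on target `t`. -/
structure CnotLayer (N : ℕ) where
  control : Fin N → Option (Fin N)
  control_control : ∀ ⦃t c⦄, control t = some c → control c = none
  control_injective : ∀ ⦃t₁ t₂ c⦄, control t₁ = some c → control t₂ = some c → t₁ = t₂

namespace CnotLayer

variable {N : ℕ} (L : CnotLayer N)

theorem control_ne {t c : Fin N} (h : L.control t = some c) : c ≠ t := by
  rintro rfl
  simp [L.control_control h] at h

def gate (t : Fin N) : Option (Gate N) :=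
  (L.control t).pmap (fun c hc => Gate.cnot c t hc) fun _ => L.control_ne

def circuit : Circuit N := (List.finRange N).filterMap L.gate

def apply (x : Fin N → Bool) (t : Fin N) : Bool :=
  (L.control t).elim (x t) fun c => xor (x t) (x c)

theorem eval_gate (t : Fin N) (x : Fin N → Bool) :
    Circuit.eval (L.gate t).toList x = Function.update x t (L.apply x t) := by
  rcases h : L.control t with _ | c
  · simp [gate, apply, h, Circuit.eval_nil]
  · simp [gate, apply, h, Circuit.eval_cons_s19, Circuit.eval_nil, Gate.cnot_apply]

theorem apply_update_apply {a t : Fin N} (hta : t ≠ a) (x : Fin N → Bool) :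
    L.apply (Function.update x a (L.apply x a)) t = L.apply x t := by
  rcases ha : L.control a with _ | c'
  · simp [apply, ha]
  · rcases ht : L.control t with _ | c
    · simp [apply, ht, hta]
    · have hca : c ≠ a := by
        rintro rfl
        simp [L.control_control ht] at ha
      simp [apply, ht, hta, hca]

theorem eval_filterMap_gate {l : List (Fin N)} (hl : l.Nodup) (x : Fin N → Bool) :
    Circuit.eval (l.filterMap L.gate) x = fun t => if t ∈ l then L.apply x t else x t := by
  induction l generalizing x with
  | nil => rfl
  | cons a l ih =>
    obtain ⟨ha, hl⟩ := List.nodup_cons.mp hl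
    have hcons : (a :: l).filterMap L.gate = (L.gate a).toList ++ l.filterMap L.gate := by
      cases h : L.gate a <;> simp [h]
    rw [hcons, Circuit.eval_append_s19, eval_gate, ih hl]
    funext t
    by_cases hta : t = a
    · subst hta; simp [ha]
    · by_cases htl : t ∈ l <;> simp [hta, htl, L.apply_update_apply hta]

theorem eval_circuit (x : Fin N → Bool) : L.circuit.eval x = L.apply x := by
  simp [circuit, L.eval_filterMap_gate (List.nodup_finRange N)]

theorem cnot_mem_circuit {t c : Fin N} (h : L.control t = some c) :
    Gate.cnot c t (L.control_ne h) ∈ L.circuit :=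
  List.mem_filterMap.mpr ⟨t, List.mem_finRange t, by simp [gate, h]⟩

theorem card_I_of_mem_circuit {g : Gate N} (hg : g ∈ L.circuit) : g.I.card = 1 := by
  obtain ⟨t, -, hg⟩ := List.mem_filterMap.mp hg
  obtain ⟨c, -, -, rfl⟩ := Option.pmap_eq_some_iff.mp hg
  simp [Gate.cnot]

theorem depthOne_circuit : DepthOne L.circuit := by
  refine List.pairwise_filterMap.mpr ((List.nodup_finRange N).imp ?_)
  intro t₁ t₂ hne g₁ hg₁ g₂ hg₂
  obtain ⟨c₁, -, h₁, rfl⟩ := Option.pmap_eq_some_iff.mp hg₁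
  obtain ⟨c₂, -, h₂, rfl⟩ := Option.pmap_eq_some_iff.mp hg₂
  have h₁₂ : c₁ ≠ t₂ := by rintro rfl; simp [L.control_control h₁] at h₂
  have h₂₁ : c₂ ≠ t₁ := by rintro rfl; simp [L.control_control h₂] at h₁
  have hc : c₁ ≠ c₂ := by rintro rfl; exact hne (L.control_injective h₁ h₂)
  simp [Gate.cnot, Finset.disjoint_left, hne, h₁₂, hc, Ne.symm h₂₁]

theorem length_circuit : L.circuit.length = #{t | (L.control t).isSome} := by
  rw [circuit, List.length_filterMap_eq_countP, ← List.toFinset_finRange, ← List.toFinset_filter,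
    List.toFinset_card_of_nodup ((List.nodup_finRange N).filter _), List.countP_eq_length_filter]
  simp [gate]

end CnotLayer

theorem lt_of_two_pow_add_lt {j c s : ℕ} (h : 2 ^ j + c < 2 ^ s) : j < s :=
  (Nat.pow_lt_pow_iff_right one_lt_two).mp (by omega)

theorem two_pow_add_lt_two_pow {i j d : ℕ} (hd : d < 2 ^ i) (hij : i < j) :
    2 ^ i + d < 2 ^ j := by
  have := Nat.pow_le_pow_right two_pos hij
  rw [pow_succ] at this
  omega

theorem log_two_pow_add {j c : ℕ} (hc : c < 2 ^ j) : lg (2 ^ j + c) = j :=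
  Nat.log_eq_of_pow_le_of_lt_pow (by omega) (by rw [pow_succ]; omega)

def lowPart (m : ℕ) : ℕ := m - 2 ^ lg m

theorem lowPart_two_pow_add {j c : ℕ} (hc : c < 2 ^ j) : lowPart (2 ^ j + c) = c := by
  simp [lowPart, log_two_pow_add hc]

theorem exists_eq_two_pow_add {m : ℕ} (hm : m ≠ 0) : ∃ j c, c < 2 ^ j ∧ m = 2 ^ j + c := by
  have hle := Nat.pow_log_le_self 2 hm
  have hlt := Nat.lt_pow_succ_log_self one_lt_two m
  rw [pow_succ] at hlt
  exact ⟨lg m, m - 2 ^ lg m, by omega, by omega⟩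

/-- `subsetXorAll` with the subset encoded by an arbitrary natural number. -/
def subsetXor {s : ℕ} (x : Fin s → Bool) (m : ℕ) : Bool :=
  decide ((univ.filter fun i : Fin s => m.testBit i ∧ x i = true).card % 2 = 1)

section subsetXor

variable {s : ℕ} (x : Fin s → Bool)

theorem subsetXor_zero : subsetXor x 0 = false := by
  simp [subsetXor]

theorem subsetXor_two_pow {j : ℕ} (hj : j < s) : subsetXor x (2 ^ j) = x ⟨j, hj⟩ := by
  have : (univ.filter fun i : Fin s => (2 ^ j).testBit i ∧ x i = true) =
      if x ⟨j, hj⟩ then {⟨j, hj⟩} else ∅ := by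
    ext i
    by_cases hi : i = ⟨j, hj⟩
    · subst hi; split_ifs <;> simp_all
    · have : j ≠ i := fun h => hi (Fin.ext h.symm)
      split_ifs <;> simp [Nat.testBit_two_pow, this, hi]
  rw [subsetXor, this]
  split_ifs with h <;> simp [h]

theorem decide_add_mod_two (a b : ℕ) :
    decide ((a + b) % 2 = 1) = xor (decide (a % 2 = 1)) (decide (b % 2 = 1)) := by
  rcases Nat.mod_two_eq_zero_or_one a with ha | ha <;>
    rcases Nat.mod_two_eq_zero_or_one b with hb | hb <;> simp [Nat.add_mod, ha, hb]

theorem subsetXor_two_pow_add {j c : ℕ} (hc : c < 2 ^ j) :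
    subsetXor x (2 ^ j + c) = xor (subsetXor x (2 ^ j)) (subsetXor x c) := by
  have hbits : ∀ i, (2 ^ j + c).testBit i = ((2 ^ j).testBit i || c.testBit i) := by
    intro i
    rw [← Nat.testBit_or, ← mul_one (2 ^ j), Nat.two_pow_add_eq_or_of_lt hc]
  have hdisj : Disjoint (univ.filter fun i : Fin s => (2 ^ j).testBit i ∧ x i = true)
      (univ.filter fun i : Fin s => c.testBit i ∧ x i = true) := by
    refine disjoint_filter.mpr fun i _ hi hi' => ?_
    rw [Nat.testBit_two_pow, decide_eq_true_eq] at hi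
    simp [← hi.1, Nat.testBit_eq_false_of_lt hc] at hi'
  rw [subsetXor, subsetXor, subsetXor, ← decide_add_mod_two, ← card_union_of_disjoint hdisj,
    ← filter_or]
  simp only [hbits, Bool.or_eq_true, or_and_right]

end subsetXor

theorem asympEquiv_of_abs_sub_le {a b : ℕ → ℝ} (C : ℝ) (hb : Tendsto b atTop atTop)
    (hab : ∀ n, |a n - b n| ≤ C) : AsympEquiv a b := by
  have hlim : Tendsto (fun n => (a n - b n) / b n) atTop (nhds 0) := by
    refine squeeze_zero_norm' ?_ (tendsto_const_nhds.div_atTop hb : Tendsto (fun n => C / b n) _ _)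
    filter_upwards [hb.eventually_gt_atTop 0] with n hn
    rw [Real.norm_eq_abs, abs_div, abs_of_pos hn]
    exact div_le_div_of_nonneg_right (hab n) hn.le
  refine ((add_zero (1 : ℝ)) ▸ hlim.const_add 1).congr' ?_
  filter_upwards [hb.eventually_gt_atTop 0] with n hn
  field_simp
  ring

def ancillas (s : ℕ) : ℕ := 2 ^ (s + 1) - 1

theorem ancillas_add_one (s : ℕ) : ancillas s + 1 = 2 ^ (s + 1) := by
  have := Nat.one_le_two_pow (n := s + 1)
  rw [ancillas]
  omega

theorem width_eq (s : ℕ) : s + ancillas s = s + 2 ^ s + (2 ^ s - 1) := by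
  have h := ancillas_add_one s
  rw [pow_succ] at h
  have := Nat.one_le_two_pow (n := s)
  omega

/-- Cell layout: inputs `0, …, s - 1`, accumulators `s + m` (`m < 2 ^ s`), copy cells
`copyPos s k` (`1 ≤ k < 2 ^ s`). -/
def copyPos (s k : ℕ) : ℕ := s + 2 ^ s + (k - 1)

theorem le_copyPos (s k : ℕ) : s + 2 ^ s ≤ copyPos s k := by
  rw [copyPos]
  omega

theorem copyPos_index {s k : ℕ} (hk : k ≠ 0) : copyPos s k - (s + 2 ^ s) + 1 = k := by
  rw [copyPos]
  omega

theorem copyPos_lt {s k : ℕ} (hk0 : k ≠ 0) (hk : k < 2 ^ s) : copyPos s k < s + ancillas s := by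
  rw [copyPos, width_eq]
  omega

def copyTime (k : ℕ) : ℕ := if lowPart k = 0 then 1 else lg (lowPart k) + 2

def copyFrom (s k : ℕ) : ℕ :=
  if lowPart k = 0 then lg k else copyPos s (2 ^ lg k + lowPart (lowPart k))

section copies

variable {s i j d : ℕ}

theorem lowPart_two_pow (j : ℕ) : lowPart (2 ^ j) = 0 := by
  simpa using lowPart_two_pow_add (Nat.two_pow_pos j)

theorem copyTime_two_pow (j : ℕ) : copyTime (2 ^ j) = 1 := by
  simp [copyTime, lowPart_two_pow]

theorem copyFrom_two_pow (s j : ℕ) : copyFrom s (2 ^ j) = j := by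
  simp [copyFrom, lowPart_two_pow, Nat.log_pow]

theorem copyTime_two_pow_add_two_pow_add (hd : d < 2 ^ i) (hij : i < j) :
    copyTime (2 ^ j + (2 ^ i + d)) = i + 2 := by
  have hid := two_pow_add_lt_two_pow hd hij
  simp [copyTime, lowPart_two_pow_add hid, log_two_pow_add hd]

theorem copyFrom_two_pow_add_two_pow_add (hd : d < 2 ^ i) (hij : i < j) :
    copyFrom s (2 ^ j + (2 ^ i + d)) = copyPos s (2 ^ j + d) := by
  have hid := two_pow_add_lt_two_pow hd hij
  simp [copyFrom, lowPart_two_pow_add hid, log_two_pow_add hid, lowPart_two_pow_add hd]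

theorem copyTime_two_pow_add_le (hd : d < 2 ^ i) (hij : i ≤ j) : copyTime (2 ^ j + d) ≤ i + 1 := by
  rcases eq_or_ne d 0 with rfl | hd0
  · simp [copyTime_two_pow]
  · obtain ⟨i', d', hd', rfl⟩ := exists_eq_two_pow_add hd0
    have := lt_of_two_pow_add_lt hd
    rw [copyTime_two_pow_add_two_pow_add hd' (by omega)]
    omega

end copies

def accSource (s r m : ℕ) : Option ℕ :=
  if m = 0 then none
  else if r = lg m + 2 then some (copyPos s m)
  else if r = lg m + 3 then some (s + lowPart m)
  else none

def copySource (s r k : ℕ) : Option ℕ := if r = copyTime k then some (copyFrom s k) else none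

def source (s r t : ℕ) : Option ℕ :=
  if t < s then none
  else if t < s + 2 ^ s then accSource s r (t - s)
  else copySource s r (t - (s + 2 ^ s) + 1)

section source

variable {s r : ℕ}

theorem source_of_lt {t : ℕ} (ht : t < s) : source s r t = none := by
  simp [source, ht]

theorem source_acc {m : ℕ} (hm : m < 2 ^ s) : source s r (s + m) = accSource s r m := by
  simp [source, hm]

theorem source_copy {k : ℕ} (hk : k ≠ 0) : source s r (copyPos s k) = copySource s r k := by
  have h := le_copyPos s k
  rw [source, if_neg (not_lt.mpr ((Nat.le_add_right _ _).trans h)), if_neg (not_lt.mpr h),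
    copyPos_index hk]

end source

/-- `IsCnot s r c t`: at layer `r` the cell `c` is XORed into the cell `t`. -/
inductive IsCnot (s : ℕ) : ℕ → ℕ → ℕ → Prop
  | acc_copy {j d : ℕ} (hd : d < 2 ^ j) (hs : 2 ^ j + d < 2 ^ s) :
      IsCnot s (j + 2) (copyPos s (2 ^ j + d)) (s + (2 ^ j + d))
  | acc_acc {j d : ℕ} (hd : d < 2 ^ j) (hs : 2 ^ j + d < 2 ^ s) :
      IsCnot s (j + 3) (s + d) (s + (2 ^ j + d))
  | copy_input {j : ℕ} (hj : j < s) : IsCnot s 1 j (copyPos s (2 ^ j))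
  | copy_copy {i j d : ℕ} (hd : d < 2 ^ i) (hij : i < j) (hs : 2 ^ j + (2 ^ i + d) < 2 ^ s) :
      IsCnot s (i + 2) (copyPos s (2 ^ j + d)) (copyPos s (2 ^ j + (2 ^ i + d)))

theorem isCnot_of_source {s r t c : ℕ} (ht : t < s + ancillas s) (h : source s r t = some c) :
    IsCnot s r c t := by
  rw [width_eq] at ht
  by_cases hts : t < s
  · simp [source_of_lt hts] at h
  by_cases hta : t < s + 2 ^ s
  · obtain ⟨m, rfl⟩ : ∃ m, t = s + m := ⟨t - s, by omega⟩
    have hm : m < 2 ^ s := by omega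
    rw [source_acc hm, accSource] at h
    have hm0 : m ≠ 0 := by rintro rfl; simp at h
    obtain ⟨j, d, hd, rfl⟩ := exists_eq_two_pow_add hm0
    simp only [hm0, log_two_pow_add hd, lowPart_two_pow_add hd, if_false] at h
    split_ifs at h with h2 h3
    · cases h; exact h2 ▸ .acc_copy hd hm
    · cases h; exact h3 ▸ .acc_acc hd hm
  · obtain ⟨k, hk0, rfl⟩ : ∃ k, k ≠ 0 ∧ t = copyPos s k :=
      ⟨t - (s + 2 ^ s) + 1, by simp, by rw [copyPos]; omega⟩
    have hk : k < 2 ^ s := by rw [copyPos] at ht; omega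
    obtain ⟨j, c, hc, rfl⟩ := exists_eq_two_pow_add hk0
    rw [source_copy hk0, copySource] at h
    rcases eq_or_ne c 0 with rfl | hc0
    · simp only [add_zero, copyTime_two_pow, copyFrom_two_pow] at h ⊢
      obtain ⟨rfl, ⟨⟩⟩ := Option.ite_none_right_eq_some.mp h
      exact .copy_input (lt_of_two_pow_add_lt hk)
    · obtain ⟨i, d, hd, rfl⟩ := exists_eq_two_pow_add hc0
      have hij := lt_of_two_pow_add_lt hc
      rw [copyTime_two_pow_add_two_pow_add hd hij, copyFrom_two_pow_add_two_pow_add hd hij] at h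
      obtain ⟨rfl, ⟨⟩⟩ := Option.ite_none_right_eq_some.mp h
      exact .copy_copy hd hij hk

/-- The unique cell that reads `c` at layer `r`. -/
def target (s r c : ℕ) : ℕ :=
  if c < s then copyPos s (2 ^ c)
  else if c < s + 2 ^ s then s + (2 ^ (r - 3) + (c - s))
  else
    let k := c - (s + 2 ^ s) + 1
    if r = lg k + 2 then s + k else copyPos s (k + 2 ^ (r - 2))

namespace IsCnot

variable {s r c t : ℕ}

theorem control_lt (h : IsCnot s r c t) : c < s + ancillas s := by
  have := width_eq s
  cases h with
  | acc_copy hd hs => exact copyPos_lt (by positivity) hs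
  | copy_copy hd hij hs => exact copyPos_lt (by positivity) (lt_of_le_of_lt (by omega) hs)
  | acc_acc hd hs => omega
  | copy_input hj => omega

theorem source_control (h : IsCnot s r c t) : source s r c = none := by
  cases h with
  | @acc_copy j d hd hs =>
    rw [source_copy (by positivity), copySource, if_neg]
    have := copyTime_two_pow_add_le hd le_rfl
    omega
  | @acc_acc j d hd hs =>
    rw [source_acc (by omega), accSource]
    split_ifs with hd0 h2 h3 <;> try rfl
    all_goals
      obtain ⟨i, e, he, rfl⟩ := exists_eq_two_pow_add hd0
      have := lt_of_two_pow_add_lt hd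
      rw [log_two_pow_add he] at *
      omega
  | copy_input hj => exact source_of_lt hj
  | @copy_copy i j d hd hij hs =>
    rw [source_copy (by positivity), copySource, if_neg]
    have := copyTime_two_pow_add_le hd hij.le
    omega

theorem eq_target (h : IsCnot s r c t) : t = target s r c := by
  cases h with
  | @acc_copy j d hd hs =>
    have := le_copyPos s (2 ^ j + d)
    rw [target, if_neg (by omega), if_neg (not_lt.mpr this)]
    simp [copyPos_index (by positivity : 2 ^ j + d ≠ 0), log_two_pow_add hd]
  | @acc_acc j d hd hs =>
    rw [target, if_neg (by omega), if_pos (by omega)]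
    simp
  | copy_input hj => simp [target, hj]
  | @copy_copy i j d hd hij hs =>
    have := le_copyPos s (2 ^ j + d)
    have hdj : d < 2 ^ j := (two_pow_add_lt_two_pow hd hij).trans_le' (by omega)
    rw [target, if_neg (by omega), if_neg (not_lt.mpr this)]
    simp only [copyPos_index (by positivity : 2 ^ j + d ≠ 0), log_two_pow_add hdj, add_left_inj,
      hij.ne, if_false, add_tsub_cancel_right]
    congr 1
    omega

end IsCnot

def layer (s r : ℕ) : CnotLayer (s + ancillas s) where
  control t :=
    (source s r t).pmap (fun c hc => ⟨c, hc⟩) fun _ h => (isCnot_of_source t.2 h).control_lt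
  control_control t c h := by
    obtain ⟨c, -, hc, rfl⟩ := Option.pmap_eq_some_iff.mp h
    simp [(isCnot_of_source t.2 hc).source_control]
  control_injective t₁ t₂ c h₁ h₂ := by
    obtain ⟨c₁, _, hs₁, rfl⟩ := Option.pmap_eq_some_iff.mp h₁
    obtain ⟨c₂, _, hs₂, hc⟩ := Option.pmap_eq_some_iff.mp h₂
    obtain rfl : c₁ = c₂ := congrArg Fin.val hc
    exact Fin.ext ((isCnot_of_source t₁.2 hs₁).eq_target.trans
      (isCnot_of_source t₂.2 hs₂).eq_target.symm)

theorem layer_control_eq_some {s r : ℕ} {t c : Fin (s + ancillas s)} :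
    (layer s r).control t = some c ↔ source s r t = some c := by
  refine ⟨fun h => ?_, fun h => Option.pmap_eq_some_iff.mpr ⟨c, c.2, h, rfl⟩⟩
  obtain ⟨c, -, hc, rfl⟩ := Option.pmap_eq_some_iff.mp h
  exact hc

theorem layer_apply {s r : ℕ} (y : ℕ → Bool) (t : Fin (s + ancillas s)) :
    (layer s r).apply (fun u => y u) t = (source s r t).elim (y t) fun c => xor (y t) (y c) := by
  rcases h : source s r t with _ | c <;> simp [CnotLayer.apply, layer, h]

def circuit (s : ℕ) : Circuit (s + ancillas s) :=
  ((List.range (s + 3)).map fun r => (layer s r).circuit).flatten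

theorem card_I_of_mem_circuit {s : ℕ} {g : Gate (s + ancillas s)} (hg : g ∈ circuit s) :
    g.I.card = 1 := by
  obtain ⟨_, hl, hg⟩ := List.mem_flatten.mp hg
  obtain ⟨r, -, rfl⟩ := List.mem_map.mp hl
  exact (layer s r).card_I_of_mem_circuit hg

section state

variable {s : ℕ} (x : Fin s → Bool)

def accState (n m : ℕ) : Bool :=
  if m = 0 then false
  else if lg m + 3 < n then subsetXor x m
  else if lg m + 2 < n then subsetXor x (2 ^ lg m)
  else false

def copyState (n k : ℕ) : Bool := if copyTime k < n then subsetXor x (2 ^ lg k) else false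

/-- The contents of the cell `t` after the first `n` layers. -/
def state (n t : ℕ) : Bool :=
  if h : t < s then x ⟨t, h⟩
  else if t < s + 2 ^ s then accState x n (t - s)
  else copyState x n (t - (s + 2 ^ s) + 1)

variable {x}

theorem state_of_lt {n t : ℕ} (h : t < s) : state x n t = x ⟨t, h⟩ := by
  simp [state, h]

theorem state_acc {n m : ℕ} (hm : m < 2 ^ s) : state x n (s + m) = accState x n m := by
  simp [state, hm]

theorem state_copy {n k : ℕ} (hk : k ≠ 0) : state x n (copyPos s k) = copyState x n k := by
  have h := le_copyPos s k
  rw [state, dif_neg (not_lt.mpr ((Nat.le_add_right _ _).trans h)), if_neg (not_lt.mpr h),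
    copyPos_index hk]

theorem state_zero (t : ℕ) : state x 0 t = if h : t < s then x ⟨t, h⟩ else false := by
  simp [state, accState, copyState]

theorem accState_eq_subsetXor {n j c : ℕ} (hc : c < 2 ^ j) (hn : j + 2 < n) :
    accState x n c = subsetXor x c := by
  rcases eq_or_ne c 0 with rfl | hc0
  · simp [accState, subsetXor_zero]
  · obtain ⟨i, d, hd, rfl⟩ := exists_eq_two_pow_add hc0
    have := lt_of_two_pow_add_lt hc
    simp [accState, log_two_pow_add hd]
    omega

theorem state_acc_succ {n m : ℕ} (hm : m < 2 ^ s) :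
    state x (n + 1) (s + m) =
      (accSource s n m).elim (state x n (s + m))
        fun c => xor (state x n (s + m)) (state x n c) := by
  rw [state_acc hm, state_acc hm]
  rcases eq_or_ne m 0 with rfl | hm0
  · simp [accSource, accState]
  obtain ⟨j, c, hc, rfl⟩ := exists_eq_two_pow_add hm0
  have hcs : c < 2 ^ s := by omega
  simp only [accSource, accState, hm0, log_two_pow_add hc, lowPart_two_pow_add hc, if_false]
  by_cases h2 : n = j + 2
  · subst h2
    have := copyTime_two_pow_add_le hc le_rfl
    simp [state_copy hm0, copyState, log_two_pow_add hc, this.trans_lt (Nat.lt_succ_self _)]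
  by_cases h3 : n = j + 3
  · subst h3
    simp [state_acc hcs, accState_eq_subsetXor hc (Nat.lt_succ_self _),
      subsetXor_two_pow_add x hc]
  simp only [h2, h3, if_false, Option.elim_none]
  split_ifs <;> first | rfl | omega

theorem state_copy_succ {n k : ℕ} (hk0 : k ≠ 0) (hk : k < 2 ^ s) :
    state x (n + 1) (copyPos s k) =
      (copySource s n k).elim (state x n (copyPos s k))
        fun c => xor (state x n (copyPos s k)) (state x n c) := by
  rw [state_copy hk0, state_copy hk0, copySource, copyState, copyState]
  by_cases hn : n = copyTime k
  · obtain ⟨j, c, hc, rfl⟩ := exists_eq_two_pow_add hk0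
    have hj := lt_of_two_pow_add_lt hk
    subst hn
    simp only [if_pos, lt_irrefl, if_false, Option.elim_some, Bool.false_xor, log_two_pow_add hc,
      Nat.lt_succ_self]
    rcases eq_or_ne c 0 with rfl | hc0
    · simp [copyFrom_two_pow, state_of_lt hj, subsetXor_two_pow x hj]
    · obtain ⟨i, d, hd, rfl⟩ := exists_eq_two_pow_add hc0
      have hij := lt_of_two_pow_add_lt hc
      have hdj : d < 2 ^ j := (two_pow_add_lt_two_pow hd hij).trans_le' (by omega)
      have := copyTime_two_pow_add_le hd hij.le
      simp [copyFrom_two_pow_add_two_pow_add hd hij, copyTime_two_pow_add_two_pow_add hd hij,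
        state_copy (by positivity : 2 ^ j + d ≠ 0), copyState, log_two_pow_add hdj,
        this.trans_lt (Nat.lt_succ_self _)]
  · simp only [hn, if_false, Option.elim_none]
    split_ifs <;> first | rfl | omega

theorem state_succ {n t : ℕ} (ht : t < s + ancillas s) :
    state x (n + 1) t =
      (source s n t).elim (state x n t) fun c => xor (state x n t) (state x n c) := by
  rw [width_eq] at ht
  by_cases hts : t < s
  · simp [source_of_lt hts, state_of_lt hts]
  by_cases hta : t < s + 2 ^ s
  · obtain ⟨m, rfl⟩ : ∃ m, t = s + m := ⟨t - s, by omega⟩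
    rw [source_acc (by omega), state_acc_succ (by omega)]
  · obtain ⟨k, hk0, rfl⟩ : ∃ k, k ≠ 0 ∧ t = copyPos s k :=
      ⟨t - (s + 2 ^ s) + 1, by simp, by rw [copyPos]; omega⟩
    have hk : k < 2 ^ s := by rw [copyPos] at ht; omega
    rw [source_copy hk0, state_copy_succ hk0 hk]

end state

theorem eval_layers (s R : ℕ) (x : Fin s → Bool) :
    Circuit.eval ((List.range R).map fun r => (layer s r).circuit).flatten (pad x) =
      fun t : Fin (s + ancillas s) => state x R t := by
  induction R with
  | zero =>
    funext t
    simp [Circuit.eval_nil, pad, state_zero]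
  | succ R ih =>
    rw [List.range_succ, List.map_append, List.flatten_append, Circuit.eval_append_s19, ih]
    funext t
    simp [CnotLayer.eval_circuit, layer_apply, state_succ t.2]

theorem implements_circuit (s : ℕ) : Implements (circuit s) (subsetXorAll s) := by
  have hwidth := width_eq s
  have h1 : 1 ≤ 2 ^ s := Nat.one_le_two_pow
  have : NeZero (s + ancillas s) := ⟨by omega⟩
  refine ⟨by omega, Equiv.addLeft ⟨s, by omega⟩, fun x j hj => ?_⟩
  have hval : ((⟨s, by omega⟩ + ⟨j, hj⟩ : Fin (s + ancillas s)) : ℕ) = s + j := by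
    simp [Fin.val_add, Nat.mod_eq_of_lt (by omega : s + j < s + ancillas s)]
  simp only [Equiv.coe_addLeft, circuit, eval_layers, hval, state_acc j.2]
  exact accState_eq_subsetXor j.2 (Nat.lt_succ_self _)

theorem length_layer_circuit (s r : ℕ) :
    (layer s r).circuit.length =
      ∑ t ∈ range (s + ancillas s), if (source s r t).isSome then 1 else 0 := by
  rw [CnotLayer.length_circuit, card_filter, ← Fin.sum_univ_eq_sum_range]
  simp [layer]

def writeCount (s t : ℕ) : ℕ := #{r ∈ range (s + 3) | (source s r t).isSome}

theorem length_circuit_eq_sum (s : ℕ) :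
    (circuit s).length = ∑ t ∈ range (s + ancillas s), writeCount s t := by
  have hsum : ∀ f : ℕ → ℕ, ((List.range (s + 3)).map f).sum = ∑ r ∈ range (s + 3), f r := by
    intro f
    rw [Finset.sum_eq_multiset_sum, Finset.range_val, Multiset.range, Multiset.map_coe,
      Multiset.sum_coe]
  rw [circuit, List.length_flatten, List.map_map, hsum]
  simp_rw [Function.comp_apply, length_layer_circuit, writeCount, card_filter]
  exact sum_comm

theorem writeCount_of_lt {s t : ℕ} (ht : t < s) : writeCount s t = 0 := by
  simp [writeCount, source_of_lt ht]

theorem writeCount_acc_zero (s : ℕ) : writeCount s s = 0 := by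
  have h (r : ℕ) : source s r s = none := by
    simpa [accSource] using source_acc (s := s) (r := r) (Nat.two_pow_pos s)
  simp [writeCount, h]

theorem writeCount_acc {s m : ℕ} (hm0 : m ≠ 0) (hm : m < 2 ^ s) : writeCount s (s + m) = 2 := by
  obtain ⟨j, c, hc, rfl⟩ := exists_eq_two_pow_add hm0
  have hj := lt_of_two_pow_add_lt hm
  have : {r ∈ range (s + 3) | (source s r (s + (2 ^ j + c))).isSome} = {j + 2, j + 3} := by
    ext r
    simp only [mem_filter, mem_range, source_acc hm, accSource, hm0, if_false,
      log_two_pow_add hc, mem_insert, mem_singleton]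
    split_ifs <;> simp <;> omega
  rw [writeCount, this, card_pair (by omega)]

theorem writeCount_copy {s k : ℕ} (hk0 : k ≠ 0) (hk : k < 2 ^ s) :
    writeCount s (copyPos s k) = 1 := by
  obtain ⟨j, c, hc, rfl⟩ := exists_eq_two_pow_add hk0
  have := lt_of_two_pow_add_lt hk
  have := copyTime_two_pow_add_le hc le_rfl
  have : {r ∈ range (s + 3) | (source s r (copyPos s (2 ^ j + c))).isSome} =
      {copyTime (2 ^ j + c)} := by
    ext r
    simp only [mem_filter, mem_range, source_copy hk0, copySource, mem_singleton]
    split_ifs <;> simp <;> omega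
  rw [writeCount, this, card_singleton]

theorem length_circuit (s : ℕ) : (circuit s).L + 3 = 3 * 2 ^ s := by
  have h1 : 1 ≤ 2 ^ s := Nat.one_le_two_pow
  have hinputs : ∑ t ∈ range s, writeCount s t = 0 :=
    sum_eq_zero fun t ht => writeCount_of_lt (mem_range.mp ht)
  have haccs : ∑ m ∈ range (2 ^ s), writeCount s (s + m) = 2 * (2 ^ s - 1) := by
    obtain ⟨n, hn⟩ : ∃ n, 2 ^ s = n + 1 := ⟨2 ^ s - 1, by omega⟩
    rw [hn, sum_range_succ', add_zero, writeCount_acc_zero, add_zero,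
      sum_congr rfl fun m hm => writeCount_acc m.succ_ne_zero (by simp at hm; omega)]
    simp [mul_comm]
  have hcopies : ∑ i ∈ range (2 ^ s - 1), writeCount s (s + 2 ^ s + i) = 2 ^ s - 1 := by
    rw [sum_congr rfl (g := fun _ => 1) fun i hi => ?_]
    · simp
    · have := writeCount_copy (s := s) (k := i + 1) i.succ_ne_zero (by simp at hi; omega)
      rwa [copyPos, Nat.add_sub_cancel] at this
  rw [Circuit.L, length_circuit_eq_sum, width_eq, sum_range_add, sum_range_add, hinputs, haccs,
    hcopies]
  omega

theorem D_circuit_le (s : ℕ) : (circuit s).D ≤ s + 3 :=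
  (Circuit.D_le_length _ rfl (by simp [CnotLayer.depthOne_circuit])).trans (by simp)

theorem acc_lt_width {s m : ℕ} (hm : m < 2 ^ s) : s + m < s + ancillas s := by
  rw [width_eq]
  omega

def chainGate (s : ℕ) (k : Fin s) : Gate (s + ancillas s) :=
  have hk : 2 ^ (k : ℕ) - 1 < 2 ^ (k : ℕ) := Nat.sub_lt (Nat.two_pow_pos _) one_pos
  Gate.cnot ⟨s + (2 ^ (k : ℕ) - 1), acc_lt_width (hk.trans (Nat.pow_lt_pow_right one_lt_two k.2))⟩
    ⟨s + (2 ^ (k : ℕ) + (2 ^ (k : ℕ) - 1)), acc_lt_width (two_pow_add_lt_two_pow hk k.2)⟩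
    (by simp [Fin.ext_iff])

theorem chainGate_mem_layer (s : ℕ) (k : Fin s) : chainGate s k ∈ (layer s (3 + k)).circuit := by
  have hk : 2 ^ (k : ℕ) - 1 < 2 ^ (k : ℕ) := Nat.sub_lt (Nat.two_pow_pos _) one_pos
  have hsrc : source s (3 + k) (s + (2 ^ (k : ℕ) + (2 ^ (k : ℕ) - 1))) =
      some (s + (2 ^ (k : ℕ) - 1)) := by
    rw [source_acc (two_pow_add_lt_two_pow hk k.2), accSource, if_neg (by positivity),
      log_two_pow_add hk, lowPart_two_pow_add hk, if_neg (by omega), if_pos (by omega)]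
  exact (layer s (3 + k)).cnot_mem_circuit (layer_control_eq_some.mpr hsrc)

theorem chainGate_overlaps (s k : ℕ) (hk : k + 1 < s) :
    (chainGate s ⟨k, by omega⟩).Overlaps (chainGate s ⟨k + 1, hk⟩) := by
  refine not_disjoint_iff.mpr ⟨(chainGate s ⟨k, by omega⟩).t, mem_insert_self _ _, ?_⟩
  have := Nat.one_le_two_pow (n := k)
  simp [chainGate, Gate.cnot, Fin.ext_iff, pow_succ]
  omega

theorem le_D_circuit (s : ℕ) : s ≤ (circuit s).D := by
  have hchain : (List.ofFn (chainGate s)).IsChain Gate.Overlaps :=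
    List.isChain_ofFn.mpr fun k hk => chainGate_overlaps s k hk
  have hmem : List.Forall₂ (· ∈ ·) (List.ofFn (chainGate s))
      (List.ofFn fun k : Fin s => (layer s (3 + k)).circuit) := by
    simp only [List.ofFn_eq_map, List.forall₂_map_left_iff, List.forall₂_map_right_iff,
      List.forall₂_same]
    exact fun k _ => chainGate_mem_layer s k
  have hlayers : (List.ofFn fun k : Fin s => (layer s (3 + k)).circuit).Sublist
      ((List.range (s + 3)).map fun r => (layer s r).circuit) := by
    have hofFn : (List.ofFn fun k : Fin s => (layer s (3 + k)).circuit) =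
        (List.range s).map fun i => (layer s (3 + i)).circuit := by
      rw [List.ofFn_eq_map, ← List.map_coe_finRange_eq_range, List.map_map]
      rfl
    rw [hofFn, show s + 3 = 3 + s from Nat.add_comm s 3, List.range_add, List.map_append,
      List.map_map]
    exact List.sublist_append_right _ _
  simpa [circuit] using Circuit.length_le_D_of_isChain
    ((List.sublist_flatten_of_forall₂_mem hmem).trans hlayers.flatten) hchain

/-- All `2ˢ` subset-XORs of `s` variables can be implemented by reversible circuits
`S_s` consisting only of CNOT gates, with `q s` additional inputs, where
`D(S_s) ~ s`, `L(S_s) ~ 3 · 2ˢ` and `q s ~ 2^{s+1}`. -/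
theorem subset_xors_depth :
    ∃ (q : ℕ → ℕ) (S : ∀ s, Circuit (s + q s)),
      (∀ s, (∀ g ∈ S s, g.I.card = 1) ∧ Implements (S s) (subsetXorAll s)) ∧
      AsympEquiv (fun s => ((S s).D : ℝ)) (fun s => (s : ℝ)) ∧
      AsympEquiv (fun s => ((S s).L : ℝ)) (fun s => 3 * (2 : ℝ) ^ s) ∧
      AsympEquiv (fun s => (q s : ℝ)) (fun s => (2 : ℝ) ^ (s + 1)) := by
  have two_pow : Tendsto (fun s : ℕ => (2 : ℝ) ^ s) atTop atTop :=
    tendsto_pow_atTop_atTop_of_one_lt one_lt_two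
  refine ⟨ancillas, circuit, fun s => ⟨fun _ => card_I_of_mem_circuit, implements_circuit s⟩,
    ?_, ?_, ?_⟩
  · refine asympEquiv_of_abs_sub_le 3 tendsto_natCast_atTop_atTop fun s => abs_le.mpr ?_
    have h₁ : (s : ℝ) ≤ (circuit s).D := by exact_mod_cast le_D_circuit s
    have h₂ : ((circuit s).D : ℝ) ≤ s + 3 := by exact_mod_cast D_circuit_le s
    constructor <;> linarith
  · refine asympEquiv_of_abs_sub_le 3 (two_pow.const_mul_atTop three_pos) fun s => abs_le.mpr ?_
    have h : ((circuit s).L : ℝ) + 3 = 3 * 2 ^ s := by exact_mod_cast length_circuit s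
    constructor <;> linarith
  · refine asympEquiv_of_abs_sub_le 1 (two_pow.comp (tendsto_add_atTop_nat 1)) fun s =>
      abs_le.mpr ?_
    have h : (ancillas s : ℝ) + 1 = 2 ^ (s + 1) := by exact_mod_cast ancillas_add_one s
    constructor <;> linarith

end Rev
end
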